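/- arXiv:math/0301064 — 2 statements merged into one kernel-verified Lean document; each statement's English description precedes it below -/
import Mathlib

section
/- Conversely, if the map c(i ⊗ j) = q_{ij} (i ▷ j) ⊗ i (with all q_{ij} nonzero and each map i ▷ − bijective) satisfies the braid equation on V⊗V⊗V, then ▷ is self-distributive: i ▷ (j ▷ k) = (i ▷ j) ▷ (i ▷ k) for all i,j,k ∈ X, and q satisfies the 2-cocycle condition q_{i, j ▷ k} q_{j,k} = q_{i ▷ j, i ▷ k} q_{i,k}. -/
/-!
Evaluated on a basis tensor `(x i ⊗ x j) ⊗ x k`, both sides of the braid equation give a nonzero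
multiple of a basis tensor, with first factor `x ((i ▷ j) ▷ (i ▷ k))`, resp. `x (i ▷ (j ▷ k))`.
Linear independence of the tensor basis makes these indices and the two scalars agree; cancelling
`q i j` from the scalars gives the cocycle condition.
-/

open TensorProduct

/-- `c ⊗ id` acting on `(V ⊗ V) ⊗ V`. -/
noncomputable def braidC12 {V : Type*} [AddCommGroup V] [Module ℂ V]
    (c : V ⊗[ℂ] V →ₗ[ℂ] V ⊗[ℂ] V) :
    (V ⊗[ℂ] V) ⊗[ℂ] V →ₗ[ℂ] (V ⊗[ℂ] V) ⊗[ℂ] V :=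
  LinearMap.rTensor V c

/-- `id ⊗ c` acting on `(V ⊗ V) ⊗ V`, via the associator. -/
noncomputable def braidC23 {V : Type*} [AddCommGroup V] [Module ℂ V]
    (c : V ⊗[ℂ] V →ₗ[ℂ] V ⊗[ℂ] V) :
    (V ⊗[ℂ] V) ⊗[ℂ] V →ₗ[ℂ] (V ⊗[ℂ] V) ⊗[ℂ] V :=
  (TensorProduct.assoc ℂ V V V).symm.toLinearMap ∘ₗ
    (LinearMap.lTensor V c) ∘ₗ (TensorProduct.assoc ℂ V V V).toLinearMap

/-- The braid equation `(c⊗id)(id⊗c)(c⊗id) = (id⊗c)(c⊗id)(id⊗c)`. -/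
def IsBraiding {V : Type*} [AddCommGroup V] [Module ℂ V]
    (c : V ⊗[ℂ] V →ₗ[ℂ] V ⊗[ℂ] V) : Prop :=
  braidC12 c ∘ₗ braidC23 c ∘ₗ braidC12 c = braidC23 c ∘ₗ braidC12 c ∘ₗ braidC23 c

theorem LinearIndependent.eq_and_eq_of_smul_eq_smul {R M ι : Type*} [Ring R] [AddCommGroup M]
    [Module R M] {v : ι → M} (hv : LinearIndependent R v) {a b : R} {i j : ι} (ha : a ≠ 0)
    (h : a • v i = b • v j) : i = j ∧ a = b := by
  obtain rfl := hv.eq_of_smul_apply_eq_smul_apply a b i j ha h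
  exact ⟨rfl, hv.smul_left_injective i h⟩

section BraidOnBasis

variable {V X : Type*} [AddCommGroup V] [Module ℂ V]

theorem eq_and_eq_of_smul_tmul_tmul_eq (x : Module.Basis X ℂ V) {a b : ℂ} {i j k i' j' k' : X}
    (ha : a ≠ 0) (h : a • ((x i ⊗ₜ[ℂ] x j) ⊗ₜ[ℂ] x k) = b • ((x i' ⊗ₜ[ℂ] x j') ⊗ₜ[ℂ] x k')) :
    i = i' ∧ a = b := by
  have hB := ((x.tensorProduct x).tensorProduct x).linearIndependent
  simp only [← Module.Basis.tensorProduct_apply] at h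
  obtain ⟨hidx, hab⟩ := hB.eq_and_eq_of_smul_eq_smul ha h
  exact ⟨congrArg (·.1.1) hidx, hab⟩

variable {x : Module.Basis X ℂ V} {op : X → X → X} {q : X → X → ℂ}
  {c : V ⊗[ℂ] V →ₗ[ℂ] V ⊗[ℂ] V} (hc : ∀ i j, c (x i ⊗ₜ[ℂ] x j) = q i j • (x (op i j) ⊗ₜ[ℂ] x i))
include hc

theorem braidC12_braidC23_braidC12_basis (i j k : X) :
    (braidC12 c ∘ₗ braidC23 c ∘ₗ braidC12 c) ((x i ⊗ₜ[ℂ] x j) ⊗ₜ[ℂ] x k) =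
      (q i j * q i k * q (op i j) (op i k)) •
        ((x (op (op i j) (op i k)) ⊗ₜ[ℂ] x (op i j)) ⊗ₜ[ℂ] x i) := by
  simp [braidC12, braidC23, hc, ← smul_tmul', smul_smul]

theorem braidC23_braidC12_braidC23_basis (i j k : X) :
    (braidC23 c ∘ₗ braidC12 c ∘ₗ braidC23 c) ((x i ⊗ₜ[ℂ] x j) ⊗ₜ[ℂ] x k) =
      (q j k * q i (op j k) * q i j) • ((x (op i (op j k)) ⊗ₜ[ℂ] x (op i j)) ⊗ₜ[ℂ] x i) := by
  simp [braidC12, braidC23, hc, ← smul_tmul', smul_smul]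

end BraidOnBasis

theorem braid_equation_implies_rack_and_cocycle_general
    {V : Type*} [AddCommGroup V] [Module ℂ V] {X : Type*}
    (x : Module.Basis X ℂ V) (op : X → X → X) (q : X → X → ℂˣ)
    (c : V ⊗[ℂ] V →ₗ[ℂ] V ⊗[ℂ] V)
    (hc : ∀ i j, c (x i ⊗ₜ[ℂ] x j) = (q i j : ℂ) • (x (op i j) ⊗ₜ[ℂ] x i))
    (hbraid : IsBraiding c) :
    (∀ i j k, op i (op j k) = op (op i j) (op i k)) ∧
    (∀ i j k, q i (op j k) * q j k = q (op i j) (op i k) * q i k) := by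
  have key (i j k : X) : op (op i j) (op i k) = op i (op j k) ∧
      (q i j : ℂ) * q i k * q (op i j) (op i k) = q j k * q i (op j k) * q i j := by
    have h := LinearMap.congr_fun hbraid ((x i ⊗ₜ[ℂ] x j) ⊗ₜ[ℂ] x k)
    rw [braidC12_braidC23_braidC12_basis hc, braidC23_braidC12_braidC23_basis hc] at h
    exact eq_and_eq_of_smul_tmul_tmul_eq x (by simp) h
  refine ⟨fun i j k => (key i j k).1.symm, fun i j k => Units.val_injective ?_⟩
  have hscalar := (key i j k).2
  push_cast
  apply mul_left_cancel₀ (q i j).ne_zero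
  linear_combination -hscalar

theorem braid_equation_implies_rack_and_cocycle
    {V : Type*} [AddCommGroup V] [Module ℂ V] {X : Type*} [Fintype X]
    (x : Module.Basis X ℂ V) (op : X → X → X) (q : X → X → ℂˣ)
    (hbij : ∀ i, Function.Bijective (op i))
    (c : V ⊗[ℂ] V →ₗ[ℂ] V ⊗[ℂ] V)
    (hc : ∀ i j, c (x i ⊗ₜ[ℂ] x j) = (q i j : ℂ) • (x (op i j) ⊗ₜ[ℂ] x i))
    (hbraid : IsBraiding c) :
    (∀ i j k, op i (op j k) = op (op i j) (op i k)) ∧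
    (∀ i j k, q i (op j k) * q j k = q (op i j) (op i k) * q i k) :=
  braid_equation_implies_rack_and_cocycle_general x op q c hc hbraid
end

section
/- The Jordanian braiding c defined on a basis x_1,...,x_θ by c(x_i ⊗ x_1) = q x_1 ⊗ x_i and c(x_i ⊗ x_j) = (q x_j + x_{j−1}) ⊗ x_i for 2 ≤ j ≤ θ (q ∈ ℂ×) satisfies the braid equation and is invertible. -/
open TensorProduct

/-!
The Jordanian braiding is `c = (T ⊗ id) ∘ flip` with `T = q + N`, where `N` is the nilpotent
shift `x_j ↦ x_{j-1}`, `x_1 ↦ 0`. Every map `v ⊗ w ↦ T w ⊗ v` satisfies the braid equation, since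
both sides send `a ⊗ b ⊗ d` to `T² d ⊗ T b ⊗ a`; and `T` is invertible because `q ≠ 0` and
`N` is nilpotent.
-/

theorem isBraiding_map_comp_comm {V : Type*} [AddCommGroup V] [Module ℂ V]
    (T : V →ₗ[ℂ] V) :
    IsBraiding (map T LinearMap.id ∘ₗ (TensorProduct.comm ℂ V V).toLinearMap) := by
  refine TensorProduct.ext_threefold fun a b d => ?_
  simp [braidC12, braidC23]

namespace Module.Basis

variable {R V : Type*} [CommRing R] [AddCommGroup V] [Module R V] {θ : ℕ}
  (x : Basis (Fin θ) R V)

noncomputable def shiftDown : Module.End R V :=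
  x.constr R fun j => if h : 0 < j.val then x ⟨j.val - 1, by omega⟩ else 0

theorem shiftDown_apply_of_pos (j : Fin θ) (hj : 0 < j.val) :
    x.shiftDown (x j) = x ⟨j.val - 1, by omega⟩ := by
  rw [shiftDown, constr_basis, dif_pos hj]

theorem shiftDown_apply_zero (hθ : 0 < θ) : x.shiftDown (x ⟨0, hθ⟩) = 0 := by
  rw [shiftDown, constr_basis, dif_neg (lt_irrefl 0)]

theorem shiftDown_pow_apply_eq_zero {m : ℕ} (j : Fin θ) (hj : j.val < m) :
    (x.shiftDown ^ m) (x j) = 0 := by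
  induction m generalizing j with
  | zero => omega
  | succ m ih =>
    rw [pow_succ, Module.End.mul_apply]
    rcases Nat.eq_zero_or_pos j.val with h0 | hpos
    · rw [show j = ⟨0, by omega⟩ from Fin.ext h0, shiftDown_apply_zero, map_zero]
    · rw [shiftDown_apply_of_pos x j hpos, ih _ (by simp only; omega)]

theorem isNilpotent_shiftDown : IsNilpotent x.shiftDown :=
  ⟨θ, x.ext fun j => x.shiftDown_pow_apply_eq_zero j j.isLt⟩

theorem isUnit_algebraMap_add_shiftDown {q : R} (hq : IsUnit q) :
    IsUnit (algebraMap R (Module.End R V) q + x.shiftDown) :=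
  x.isNilpotent_shiftDown.isUnit_add_left_of_commute (hq.map _)
    (Algebra.commute_algebraMap_left q _).symm

end Module.Basis

theorem jordanian_braiding_braid_equation_and_invertible
    {V : Type*} [AddCommGroup V] [Module ℂ V] {θ : ℕ} (hθ : 0 < θ)
    (x : Module.Basis (Fin θ) ℂ V) (q : ℂ) (hq : q ≠ 0)
    (c : V ⊗[ℂ] V →ₗ[ℂ] V ⊗[ℂ] V)
    (hc1 : ∀ i, c (x i ⊗ₜ[ℂ] x ⟨0, hθ⟩) = q • (x ⟨0, hθ⟩ ⊗ₜ[ℂ] x i))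
    (hc2 : ∀ i, ∀ j : Fin θ, 0 < j.val →
      c (x i ⊗ₜ[ℂ] x j) =
        q • (x j ⊗ₜ[ℂ] x i) +
          x ⟨j.val - 1, lt_of_le_of_lt (Nat.sub_le _ _) j.isLt⟩ ⊗ₜ[ℂ] x i) :
    IsBraiding c ∧ Function.Bijective c := by
  set T := algebraMap ℂ (Module.End ℂ V) q + x.shiftDown
  have hcT : c = map T LinearMap.id ∘ₗ (TensorProduct.comm ℂ V V).toLinearMap := by
    refine (x.tensorProduct x).ext fun ⟨i, j⟩ => ?_
    simp only [Module.Basis.tensorProduct_apply, LinearMap.comp_apply, LinearEquiv.coe_coe,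
      comm_tmul, map_tmul, LinearMap.id_apply, T, LinearMap.add_apply,
      Module.algebraMap_end_apply, add_tmul, ← smul_tmul']
    rcases Nat.eq_zero_or_pos j.val with h0 | hpos
    · obtain rfl : j = ⟨0, hθ⟩ := Fin.ext h0
      rw [hc1, x.shiftDown_apply_zero, zero_tmul, add_zero]
    · rw [hc2 i j hpos, x.shiftDown_apply_of_pos j hpos]
  have hT : Function.Bijective T :=
    (Module.End.isUnit_iff T).mp (x.isUnit_algebraMap_add_shiftDown (isUnit_iff_ne_zero.mpr hq))
  subst hcT
  exact ⟨isBraiding_map_comp_comm T,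
    (map_bijective hT Function.bijective_id).comp (TensorProduct.comm ℂ V V).bijective⟩
end
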